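/- For every n ≥ 1, there exists a finite-dimensional representation V of B (n+1) over ℂ such that the restriction of V along the inclusion ι : B n →* B (n+1) is isomorphic, as a representation of B n, to the linearization ℂ[(ℤ/3ℤ)^n], i.e. the permutation representation of B n on the free ℂ-vector space with basis Fin n → ZMod 3. -/

import Mathlib

/-! Common setup: the signed symmetric group `B n` as a semidirect product,
its action on `Fin n → ZMod m`, and the inclusion `B n →* B (n+1)`. -/

/-- The additive automorphism of sign vectors induced by a permutation:
`ε ↦ ε ∘ σ⁻¹`. -/
def signAddAut (n : ℕ) (σ : Equiv.Perm (Fin n)) :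
    (Fin n → ZMod 2) ≃+ (Fin n → ZMod 2) :=
  { Equiv.arrowCongr σ (Equiv.refl (ZMod 2)) with
    map_add' := fun _ _ => rfl }

/-- The action of permutations on sign vectors, as a homomorphism to the
automorphism group of `Multiplicative (Fin n → ZMod 2)`. -/
def bSignHom (n : ℕ) :
    Equiv.Perm (Fin n) →* MulAut (Multiplicative (Fin n → ZMod 2)) where
  toFun σ := AddEquiv.toMultiplicative (signAddAut n σ)
  map_one' := by ext ε; rfl
  map_mul' σ τ := by ext ε; rfl

/-- The signed symmetric group on `n` letters, modelled as the semidirect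
product `(Fin n → ZMod 2) ⋊ Equiv.Perm (Fin n)`, where a permutation acts
on sign vectors by `σ • ε = ε ∘ σ⁻¹`. -/
abbrev B (n : ℕ) :=
  Multiplicative (Fin n → ZMod 2) ⋊[bSignHom n] Equiv.Perm (Fin n)

lemma neg_one_pow_val_add {M : Type*} [Monoid M] [HasDistribNeg M] (a b : ZMod 2) :
    (-1 : M) ^ (a + b).val = (-1 : M) ^ a.val * (-1 : M) ^ b.val := by
  fin_cases a <;> fin_cases b <;>
    first
    | change (-1 : M) ^ 0 = (-1 : M) ^ 0 * (-1 : M) ^ 0; simp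
    | change (-1 : M) ^ 1 = (-1 : M) ^ 0 * (-1 : M) ^ 1; simp
    | change (-1 : M) ^ 1 = (-1 : M) ^ 1 * (-1 : M) ^ 0; simp
    | change (-1 : M) ^ 0 = (-1 : M) ^ 1 * (-1 : M) ^ 1; simp

/-- The action of `B n` on `Fin n → ZMod m`: permute coordinates and negate
the coordinates with sign `1`, i.e. `((ε,σ) • x) i = (-1)^(ε i).val * x (σ⁻¹ i)`. -/
instance BAct (n m : ℕ) : MulAction (B n) (Fin n → ZMod m) where
  smul g x := fun i =>
    (-1 : ZMod m) ^ (Multiplicative.toAdd g.left i).val * x (g.right⁻¹ i)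
  one_smul x := by
    funext i
    show (-1 : ZMod m) ^ ((0 : ZMod 2)).val * x i = x i
    simp
  mul_smul g h x := by
    funext i
    show (-1 : ZMod m) ^ ((Multiplicative.toAdd g.left i)
        + (Multiplicative.toAdd h.left (g.right⁻¹ i))).val
        * x (h.right⁻¹ (g.right⁻¹ i))
      = (-1 : ZMod m) ^ (Multiplicative.toAdd g.left i).val
        * ((-1 : ZMod m) ^ (Multiplicative.toAdd h.left (g.right⁻¹ i)).val
          * x (h.right⁻¹ (g.right⁻¹ i)))
    rw [neg_one_pow_val_add, mul_assoc]

lemma bact_smul_def {n m : ℕ} (g : B n) (x : Fin n → ZMod m) (i : Fin n) :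
    (g • x) i = (-1 : ZMod m) ^ (Multiplicative.toAdd g.left i).val * x (g.right⁻¹ i) :=
  rfl

/-- Extension of a permutation of `Fin n` to `Fin (n+1)`, fixing the last letter. -/
def extendPermEquiv {n : ℕ} (σ : Equiv.Perm (Fin n)) : Equiv.Perm (Fin (n + 1)) where
  toFun := Fin.snoc (fun i => Fin.castSucc (σ i)) (Fin.last n)
  invFun := Fin.snoc (fun i => Fin.castSucc (σ⁻¹ i)) (Fin.last n)
  left_inv j := by
    induction j using Fin.lastCases with
    | last => simp
    | cast i => simp
  right_inv j := by
    induction j using Fin.lastCases with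
    | last => simp
    | cast i => simp

@[simp] lemma extendPermEquiv_castSucc {n : ℕ} (σ : Equiv.Perm (Fin n)) (i : Fin n) :
    extendPermEquiv σ (Fin.castSucc i) = Fin.castSucc (σ i) := by
  simp [extendPermEquiv]

@[simp] lemma extendPermEquiv_last {n : ℕ} (σ : Equiv.Perm (Fin n)) :
    extendPermEquiv σ (Fin.last n) = Fin.last n := by
  simp [extendPermEquiv]

@[simp] lemma extendPermEquiv_inv {n : ℕ} (σ : Equiv.Perm (Fin n)) :
    (extendPermEquiv σ)⁻¹ = extendPermEquiv σ⁻¹ := by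
  refine Equiv.ext fun j => ?_
  rw [Equiv.Perm.inv_def, Equiv.symm_apply_eq]
  induction j using Fin.lastCases with
  | last => simp
  | cast i => simp

@[simp] lemma extendPermEquiv_symm_castSucc {n : ℕ} (σ : Equiv.Perm (Fin n)) (i : Fin n) :
    (extendPermEquiv σ).symm (Fin.castSucc i) = Fin.castSucc (σ.symm i) := by
  rw [Equiv.symm_apply_eq]
  simp [Equiv.Perm.inv_def]

@[simp] lemma extendPermEquiv_symm_last {n : ℕ} (σ : Equiv.Perm (Fin n)) :
    (extendPermEquiv σ).symm (Fin.last n) = Fin.last n := by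
  rw [Equiv.symm_apply_eq]
  simp

/-- The embedding `Equiv.Perm (Fin n) →* Equiv.Perm (Fin (n+1))` extending
a permutation by the identity on the last letter. -/
def extendPerm (n : ℕ) : Equiv.Perm (Fin n) →* Equiv.Perm (Fin (n + 1)) where
  toFun := extendPermEquiv
  map_one' := by
    ext j
    induction j using Fin.lastCases with
    | last => simp
    | cast i => simp
  map_mul' σ τ := by
    ext j
    induction j using Fin.lastCases with
    | last => simp
    | cast i => simp

/-- The inclusion `B n →* B (n+1)`: extend the sign vector by `0` in the last
coordinate and the permutation by the identity on the last letter. -/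
def ιB (n : ℕ) : B n →* B (n + 1) where
  toFun g :=
    ⟨Multiplicative.ofAdd
      (Fin.snoc (Multiplicative.toAdd g.left) 0 : Fin (n + 1) → ZMod 2), extendPerm n g.right⟩
  map_one' := by
    refine SemidirectProduct.ext ?_ ?_
    · show Multiplicative.ofAdd
          (Fin.snoc (0 : Fin n → ZMod 2) (0 : ZMod 2) : Fin (n + 1) → ZMod 2) = 1
      have h : (Fin.snoc (0 : Fin n → ZMod 2) (0 : ZMod 2) : Fin (n + 1) → ZMod 2) = 0 := by
        funext j
        induction j using Fin.lastCases with
        | last => simp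
        | cast i => simp
      rw [h]; rfl
    · show extendPerm n 1 = 1
      exact map_one _
  map_mul' g h := by
    refine SemidirectProduct.ext ?_ ?_
    · show Multiplicative.ofAdd
          (Fin.snoc (Multiplicative.toAdd ((g * h).left)) 0 : Fin (n + 1) → ZMod 2) = _
      have key : (Fin.snoc (Multiplicative.toAdd ((g * h).left)) 0 : Fin (n + 1) → ZMod 2)
          = (Fin.snoc (Multiplicative.toAdd g.left) 0 : Fin (n + 1) → ZMod 2)
            + (Fin.snoc (Multiplicative.toAdd h.left) 0 : Fin (n + 1) → ZMod 2)
              ∘ ⇑((extendPermEquiv g.right)⁻¹) := by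
        funext j
        induction j using Fin.lastCases with
        | last => simp
        | cast i =>
          show (Fin.snoc (Multiplicative.toAdd g.left
              + (Multiplicative.toAdd h.left) ∘ ⇑(g.right⁻¹)) 0
              : Fin (n + 1) → ZMod 2) i.castSucc = _
          simp [Equiv.Perm.inv_def]
      rw [key]; rfl
    · show extendPerm n (g * h).right = _
      exact map_mul (extendPerm n) g.right h.right


/-! As a representation of `ZMod 2` acting on `ZMod 3` by negation, `ℂ[ZMod 3]` is the sum of
two trivial lines and one sign line; `labelBasis` is this change of basis, with labels `0`, `1`
for the trivial lines and `2` for the sign line. Taking tensor powers, `ℂ[(ZMod 3)^n]` becomes the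
monomial representation of `B n` on functions of labellings `Fin n → ZMod 3`: permutations move
the labels, and a sign flip at `i` acts by `-1` exactly when the label at `i` is `2`. The same
formula defines a representation of `B (n+1)` on functions of the labellings of `Fin (n+1)` with
sum `0`; this set is permutation invariant, and forgetting the last label identifies it with the
labellings of `Fin n`, which gives the extension. -/

open Finset Multiplicative

namespace Matrix

variable (ι : Type*) {α β γ R : Type*} [Fintype ι] [CommSemiring R]

def piKronecker (A : Matrix α β R) : Matrix (ι → α) (ι → β) R :=
  of fun x y => ∏ i, A (x i) (y i)

theorem piKronecker_mul [DecidableEq ι] [Fintype β] (A : Matrix α β R) (B : Matrix β γ R) :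
    piKronecker ι A * piKronecker ι B = piKronecker ι (A * B) := by
  ext x z
  simp only [mul_apply, piKronecker, of_apply, ← prod_mul_distrib, prod_univ_sum,
    Fintype.piFinset_univ]

theorem piKronecker_one [DecidableEq α] : piKronecker ι (1 : Matrix α α R) = 1 := by
  ext x y
  simp only [piKronecker, of_apply, one_apply, prod_ite_zero, prod_const_one, mem_univ,
    forall_const, funext_iff]

end Matrix

def ZeroSum (M : Type*) [AddCommGroup M] (k : ℕ) : Type _ := {ℓ : Fin k → M // ∑ i, ℓ i = 0}

def zeroSumEquiv (M : Type*) [AddCommGroup M] (n : ℕ) : ZeroSum M (n + 1) ≃ (Fin n → M) where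
  toFun ℓ i := ℓ.1 i.castSucc
  invFun κ := ⟨Fin.snoc κ (-∑ i, κ i), by simp [Fin.sum_univ_castSucc]⟩
  left_inv ℓ := by
    refine Subtype.ext (funext fun j => ?_)
    induction j using Fin.lastCases with
    | last =>
      have h := ℓ.2
      rw [Fin.sum_univ_castSucc] at h
      simp [eq_neg_of_add_eq_zero_right h]
    | cast i => simp
  right_inv κ := by funext i; simp

@[simp]
lemma zeroSumEquiv_apply (M : Type*) [AddCommGroup M] {n : ℕ} (ℓ : ZeroSum M (n + 1))
    (i : Fin n) : zeroSumEquiv M n ℓ i = ℓ.1 i.castSucc :=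
  rfl

instance (M : Type*) [AddCommGroup M] [Finite M] (k : ℕ) : Finite (ZeroSum M k) :=
  Subtype.finite

def ZeroSum.permute {M : Type*} [AddCommGroup M] {k : ℕ} (ℓ : ZeroSum M k)
    (σ : Equiv.Perm (Fin k)) : ZeroSum M k :=
  ⟨ℓ.1 ∘ σ, (Equiv.sum_comp σ ℓ.1).trans ℓ.2⟩

lemma ZMod.three_cases (a : ZMod 3) : a = 0 ∨ a = 1 ∨ a = 2 := by
  revert a; decide

def labelBasis : Matrix (ZMod 3) (ZMod 3) ℂ := !![1, 0, 0; 0, 1, 1; 0, 1, -1]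

noncomputable def labelBasisInv : Matrix (ZMod 3) (ZMod 3) ℂ :=
  !![1, 0, 0; 0, 1/2, 1/2; 0, 1/2, -1/2]

-- `ZMod 3` is definitionally `Fin 3`, so the products can be computed as `Fin 3` matrices.
lemma labelBasis_mul_labelBasisInv : labelBasis * labelBasisInv = 1 := by
  have h : !![(1 : ℂ), 0, 0; 0, 1, 1; 0, 1, -1] * !![1, 0, 0; 0, 1/2, 1/2; 0, 1/2, -1/2] = 1 := by
    rw [Matrix.mul_fin_three, Matrix.one_fin_three]
    norm_num
  exact h

lemma labelBasisInv_mul_labelBasis : labelBasisInv * labelBasis = 1 := by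
  have h : !![(1 : ℂ), 0, 0; 0, 1/2, 1/2; 0, 1/2, -1/2] * !![1, 0, 0; 0, 1, 1; 0, 1, -1] = 1 := by
    rw [Matrix.mul_fin_three, Matrix.one_fin_three]
    norm_num
  exact h

lemma labelBasis_apply (l a : ZMod 3) :
    labelBasis l a =
      if l = 0 then (if a = 0 then 1 else 0)
      else if l = 1 then (if a = 0 then 0 else 1)
      else if a = 1 then 1 else if a = 2 then -1 else 0 := by
  fin_cases l <;> fin_cases a <;> rfl

def labelSign (l : ZMod 3) (t : ZMod 2) : ℂ := if l = 2 then (-1) ^ t.val else 1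

lemma labelSign_add (l : ZMod 3) (s t : ZMod 2) :
    labelSign l (s + t) = labelSign l s * labelSign l t := by
  unfold labelSign
  split_ifs <;> simp [neg_one_pow_val_add]

lemma labelBasis_neg_one_pow_mul (l a : ZMod 3) (t : ZMod 2) :
    labelBasis l ((-1) ^ t.val * a) = labelSign l t * labelBasis l a := by
  obtain rfl | rfl := (by decide : ∀ t : ZMod 2, t = 0 ∨ t = 1) t <;>
  obtain rfl | rfl | rfl := ZMod.three_cases l <;> obtain rfl | rfl | rfl := ZMod.three_cases a <;>
    simp (config := {decide := true}) [labelBasis_apply, labelSign]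

def bSign {k : ℕ} (g : B k) (ℓ : Fin k → ZMod 3) : ℂ :=
  ∏ i, labelSign (ℓ i) (toAdd g.left i)

lemma bSign_one {k : ℕ} (ℓ : Fin k → ZMod 3) : bSign 1 ℓ = 1 := by
  simp [bSign, labelSign]

lemma bSign_mul {k : ℕ} (g h : B k) (ℓ : Fin k → ZMod 3) :
    bSign (g * h) ℓ = bSign g ℓ * bSign h (ℓ ∘ g.right) := by
  have hleft (i : Fin k) :
      toAdd (g * h).left i = toAdd g.left i + toAdd h.left (g.right⁻¹ i) := rfl
  simp only [bSign, hleft, labelSign_add, prod_mul_distrib]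
  rw [← Equiv.prod_comp g.right (fun i => labelSign (ℓ i) (toAdd h.left (g.right⁻¹ i)))]
  simp

noncomputable def zeroSumRep (k : ℕ) : Representation ℂ (B k) (ZeroSum (ZMod 3) k → ℂ) where
  toFun g :=
    { toFun F ℓ := bSign g ℓ.1 * F (ℓ.permute g.right)
      map_add' F G := funext fun ℓ => mul_add _ _ _
      map_smul' c F := funext fun ℓ => mul_left_comm _ c _ }
  map_one' := by
    ext F ℓ
    change bSign 1 ℓ.1 * F (ℓ.permute 1) = F ℓ
    rw [bSign_one, one_mul]
    rfl
  map_mul' g h := by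
    ext F ℓ
    change bSign (g * h) ℓ.1 * F (ℓ.permute (g.right * h.right))
      = bSign g ℓ.1 * (bSign h (ℓ.1 ∘ g.right) * F ((ℓ.permute g.right).permute h.right))
    rw [bSign_mul, mul_assoc]
    rfl

lemma zeroSumRep_apply {k : ℕ} (g : B k) (F : ZeroSum (ZMod 3) k → ℂ) (ℓ : ZeroSum (ZMod 3) k) :
    zeroSumRep k g F ℓ = bSign g ℓ.1 * F (ℓ.permute g.right) :=
  rfl

lemma toAdd_ιB_left {n : ℕ} (g : B n) :
    toAdd (ιB n g).left = Fin.snoc (toAdd g.left) 0 :=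
  rfl

lemma bSign_ιB {n : ℕ} (g : B n) (ℓ : Fin (n + 1) → ZMod 3) :
    bSign (ιB n g) ℓ = bSign g (ℓ ∘ Fin.castSucc) := by
  simp [bSign, Fin.prod_univ_castSucc, toAdd_ιB_left, labelSign]

noncomputable def labelEquiv (n : ℕ) :
    MonoidAlgebra ℂ (Fin n → ZMod 3) ≃ₗ[ℂ] (ZeroSum (ZMod 3) (n + 1) → ℂ) :=
  (MonoidAlgebra.coeffLinearEquiv ℂ).trans <|
    (Finsupp.linearEquivFunOnFinite ℂ ℂ _).trans <|
    (Matrix.toLin'OfInv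
      (by rw [Matrix.piKronecker_mul, labelBasisInv_mul_labelBasis, Matrix.piKronecker_one])
      (by rw [Matrix.piKronecker_mul, labelBasis_mul_labelBasisInv, Matrix.piKronecker_one])
      : _ ≃ₗ[ℂ] (Fin n → ZMod 3) → ℂ).trans <|
    LinearEquiv.funCongrLeft ℂ ℂ (zeroSumEquiv (ZMod 3) n)

lemma labelEquiv_single {n : ℕ} (x : Fin n → ZMod 3) (b : ℂ) (ℓ : ZeroSum (ZMod 3) (n + 1)) :
    labelEquiv n (MonoidAlgebra.single x b) ℓ = b * ∏ i, labelBasis (ℓ.1 i.castSucc) (x i) := by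
  simp [labelEquiv, Matrix.mulVec_single, Matrix.piKronecker, mul_comm]

lemma labelEquiv_single_smul {n : ℕ} (g : B n) (x : Fin n → ZMod 3) (b : ℂ) :
    labelEquiv n (MonoidAlgebra.single (g • x) b)
      = zeroSumRep (n + 1) (ιB n g) (labelEquiv n (MonoidAlgebra.single x b)) := by
  ext ℓ
  rw [zeroSumRep_apply, labelEquiv_single, labelEquiv_single, bSign_ιB, mul_left_comm]
  congr 1
  calc ∏ i, labelBasis (ℓ.1 i.castSucc) ((g • x) i)
      = ∏ i, labelSign (ℓ.1 i.castSucc) (toAdd g.left i)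
          * labelBasis (ℓ.1 i.castSucc) (x (g.right⁻¹ i)) := by
        simp only [bact_smul_def, labelBasis_neg_one_pow_mul]
    _ = bSign g (ℓ.1 ∘ Fin.castSucc)
          * ∏ i, labelBasis ((ℓ.permute (ιB n g).right).1 i.castSucc) (x i) := by
        rw [prod_mul_distrib, ← Equiv.prod_comp g.right (fun i => labelBasis _ (x (g.right⁻¹ i)))]
        simp [bSign, ZeroSum.permute, ιB, extendPerm]

theorem exists_extension_zmod_three_general (n : ℕ) :
    ∃ V : Rep ℂ (B (n + 1)), FiniteDimensional ℂ V.V ∧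
      Nonempty ((Rep.resFunctor (ιB n)).obj V
        ≅ Rep.ofMulAction ℂ (B n) (Fin n → ZMod 3)) := by
  refine ⟨Rep.of (zeroSumRep (n + 1)),
    inferInstanceAs (FiniteDimensional ℂ (ZeroSum (ZMod 3) (n + 1) → ℂ)),
    ⟨(Rep.mkIso (Representation.Equiv.mk (labelEquiv n) fun g => ?_)).symm⟩⟩
  refine MonoidAlgebra.lhom_ext' fun x => LinearMap.ext fun b => ?_
  simpa using labelEquiv_single_smul g x b

/-- **Theorem (m = 3).** For every `n ≥ 1`, there is a finite-dimensional
representation `V` of `B (n+1)` over `ℂ` whose restriction along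
`ιB n : B n →* B (n+1)` is isomorphic, as a representation of `B n`, to the
linearization `ℂ[(ℤ/3ℤ)^n]`, i.e. the permutation representation of `B n` on
the free `ℂ`-vector space with basis `Fin n → ZMod 3`. -/
theorem exists_extension_zmod_three (n : ℕ) (hn : 1 ≤ n) :
    ∃ V : Rep ℂ (B (n + 1)), FiniteDimensional ℂ V.V ∧
      Nonempty ((Rep.resFunctor (ιB n)).obj V
        ≅ Rep.ofMulAction ℂ (B n) (Fin n → ZMod 3)) :=
  exists_extension_zmod_three_general n
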